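/- There exists an integer N₀ such that for every n ≥ N₀ the core of the n-firm game (Fin n, v^n) is nonempty; indeed, the equal-split allocation x_i = (a-c)²/(4n) satisfies Σ_{i∈S} x_i = |S|·(a-c)²/(4n) ≥ v^n(|S|) for every nonempty S ⊆ Fin n. -/

import Mathlib

/-- Stirling number of the second kind (as a real number):
`K m j = (1/j!) · Σ_{i=0}^{j} (-1)^i · C(j,i) · (j-i)^m`. -/
noncomputable def K (m j : ℕ) : ℝ :=
  (1 / (Nat.factorial j : ℝ)) *
    ∑ i ∈ Finset.range (j + 1), (-1 : ℝ) ^ i * (Nat.choose j i : ℝ) * ((j - i : ℕ) : ℝ) ^ m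

/-- Bell number `B m = Σ_{j=1}^{m} K m j`. -/
noncomputable def B (m : ℕ) : ℝ := ∑ j ∈ Finset.Icc 1 m, K m j

/-- Uniform partition distribution: `f n s j = K (n-s) j / B (n-s)`. -/
noncomputable def f (n s j : ℕ) : ℝ := K (n - s) j / B (n - s)

/-- `F n s = Σ_{j=1}^{n-s} j · f n s j / (j+1)`. -/
noncomputable def F (n s : ℕ) : ℝ :=
  ∑ j ∈ Finset.Icc 1 (n - s), (j : ℝ) * f n s j / ((j : ℝ) + 1)

/-- Value of a coalition of size `s` in the `n`-firm uniform-distribution game: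
`v^n(n) = (a-c)²/4`, `v^n(0) = 0`, and for `1 ≤ s ≤ n-1`,
`v^n(s) = (a-c)² · (1-F)/(2-F)² · Σ_{j=1}^{n-s} f n s j / (j+1)`. -/
noncomputable def v (a c : ℝ) (n s : ℕ) : ℝ :=
  if s = n then (a - c) ^ 2 / 4
  else if s = 0 then 0
  else (a - c) ^ 2 * ((1 - F n s) / (2 - F n s) ^ 2) *
    ∑ j ∈ Finset.Icc 1 (n - s), f n s j / ((j : ℝ) + 1)

/-!
For `s < n` put `m = n - s` and `G = meanInvSucc m`, the mean of `1 / (J + 1)` for `J` the number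
of blocks of a uniformly random partition of `m` points. Then `1 - F n s = G` and
`v^n(s) = (a - c)² (G / (1 + G))²`, so the equal split is in the core as soon as
`(G / (1 + G))² ≤ s / (4n)`. As `J ≥ 1`, `G ≤ 1/2`, which settles `s ≥ 4n/9`. Otherwise `m ≥ 5n/9`
is large and `G = O(1/√m)`: there are at most `t (t + 1)^m` partitions with at most `t` blocks,
whereas `B(m) ≥ S(m, k) ≥ k^(m - k)` with `k ≈ m/3`; for `t ≈ 6√m` these partitions carry
probability at most `1 / (t + 2)`, and on the others `1 / (J + 1) ≤ 1 / (t + 2)`. Hence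
`G² ≤ 1 / (8m) ≤ 1 / (4n)`.
-/

open Finset

namespace Nat

variable {R : Type*} [CommRing R]

theorem sum_range_succ_mul_alternating_choose_mul_pow (m j : ℕ) :
    ∑ i ∈ range (j + 2), (i : R) * ((-1) ^ i * ((j + 1).choose i : R) * ((j + 1 - i : ℕ) : R) ^ m)
      = -((j + 1) * ∑ i ∈ range (j + 1), (-1) ^ i * (j.choose i : R) * ((j - i : ℕ) : R) ^ m) := by
  rw [sum_range_succ', Nat.cast_zero, zero_mul, add_zero, mul_sum, ← sum_neg_distrib]
  refine sum_congr rfl fun i _ => ?_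
  have absorb : ((i : R) + 1) * ((j + 1).choose (i + 1) : R) = (j + 1) * (j.choose i : R) := by
    simpa using congrArg (Nat.cast : ℕ → R) ((add_one_mul_choose_eq j i).trans (mul_comm _ _)).symm
  rw [show j + 1 - (i + 1) = j - i by omega, pow_succ]
  push_cast
  linear_combination (-(-1) ^ i * ((j - i : ℕ) : R) ^ m) * absorb

theorem factorial_mul_stirlingSecond_eq_sum (m j : ℕ) :
    (j ! * stirlingSecond m j : R)
      = ∑ i ∈ range (j + 1), (-1) ^ i * (j.choose i : R) * ((j - i : ℕ) : R) ^ m := by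
  induction m generalizing j with
  | zero =>
    rcases j with _ | j
    · simp
    have := congrArg (Int.cast : ℤ → R) (Int.alternating_sum_range_choose (n := j + 1))
    push_cast at this
    simp [this]
  | succ m ih =>
    rcases j with _ | j
    · simp
    have peel : ∀ i ∈ range (j + 2),
        (-1) ^ i * ((j + 1).choose i : R) * ((j + 1 - i : ℕ) : R) ^ (m + 1)
          = (j + 1) * ((-1) ^ i * ((j + 1).choose i : R) * ((j + 1 - i : ℕ) : R) ^ m)
            - i * ((-1) ^ i * ((j + 1).choose i : R) * ((j + 1 - i : ℕ) : R) ^ m) := by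
      intro i hi
      rw [pow_succ, Nat.cast_sub (by simpa [Nat.lt_succ_iff] using hi)]
      push_cast
      ring
    rw [sum_congr rfl peel, sum_sub_distrib, ← mul_sum,
      sum_range_succ_mul_alternating_choose_mul_pow, ← ih, ← ih, stirlingSecond_succ_succ,
      factorial_succ]
    push_cast
    ring

theorem stirlingSecond_le_succ_pow : ∀ m j : ℕ, stirlingSecond m j ≤ (j + 1) ^ m
  | 0, 0 => le_rfl
  | 0, _ + 1 => by simp
  | _ + 1, 0 => by simp
  | m + 1, j + 1 => by
    have h₁ := stirlingSecond_le_succ_pow m (j + 1)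
    have h₂ := (stirlingSecond_le_succ_pow m j).trans
      (Nat.pow_le_pow_left (Nat.le_succ (j + 1)) m)
    rw [stirlingSecond_succ_succ, pow_succ]
    nlinarith

theorem pow_le_stirlingSecond (k : ℕ) : ∀ d : ℕ, k ^ d ≤ stirlingSecond (k + d) k
  | 0 => by simp [stirlingSecond_self]
  | d + 1 => by
    rcases k with _ | k
    · simp
    rw [← add_assoc, stirlingSecond_succ_succ, pow_succ']
    have := pow_le_stirlingSecond (k + 1) d
    nlinarith

theorem pow_le_pow_of_pow_le_pow {a b p q d e : ℕ} (ha : 1 ≤ a) (hq : q ≠ 0)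
    (hab : a ^ p ≤ b ^ q) (hde : q * e ≤ p * d) : a ^ e ≤ b ^ d := by
  refine (Nat.pow_le_pow_iff_left hq).mp ?_
  calc (a ^ e) ^ q = a ^ (q * e) := by rw [← pow_mul, mul_comm]
    _ ≤ a ^ (p * d) := Nat.pow_le_pow_right ha hde
    _ = (a ^ p) ^ d := pow_mul a p d
    _ ≤ (b ^ q) ^ d := Nat.pow_le_pow_left hab d
    _ = (b ^ d) ^ q := by rw [← pow_mul, ← pow_mul, mul_comm]

end Nat

theorem sum_div_succ_le_sum_add_div {w : ℕ → ℝ} (hw : ∀ j, 0 ≤ w j) (m t : ℕ) :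
    ∑ j ∈ Icc 1 m, w j / ((j : ℝ) + 1)
      ≤ ∑ j ∈ Icc 1 t, w j + (∑ j ∈ Icc 1 m, w j) / ((t : ℝ) + 2) := by
  rw [← sum_filter_add_sum_filter_not (Icc 1 m) (· ≤ t), sum_div]
  refine add_le_add ?_ ?_
  · calc ∑ j ∈ (Icc 1 m).filter (· ≤ t), w j / ((j : ℝ) + 1)
        ≤ ∑ j ∈ (Icc 1 m).filter (· ≤ t), w j :=
          sum_le_sum fun j _ => div_le_self (hw j) (by linarith [j.cast_nonneg (α := ℝ)])
      _ ≤ ∑ j ∈ Icc 1 t, w j := by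
          refine sum_le_sum_of_subset_of_nonneg (fun j hj => ?_) fun j _ _ => hw j
          simp only [mem_filter, mem_Icc] at hj ⊢
          omega
  · calc ∑ j ∈ (Icc 1 m).filter (¬ · ≤ t), w j / ((j : ℝ) + 1)
        ≤ ∑ j ∈ (Icc 1 m).filter (¬ · ≤ t), w j / ((t : ℝ) + 2) := by
          refine sum_le_sum fun j hj => div_le_div_of_nonneg_left (hw j) (by positivity) ?_
          have : t + 1 ≤ j := by simp only [mem_filter] at hj; omega
          exact_mod_cast Nat.add_le_add_right this 1
      _ ≤ ∑ j ∈ Icc 1 m, w j / ((t : ℝ) + 2) :=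
          sum_le_sum_of_subset_of_nonneg (filter_subset _ _) fun j _ _ => by
            have := hw j; positivity

theorem K_eq_stirlingSecond (m j : ℕ) : K m j = Nat.stirlingSecond m j := by
  rw [K, ← Nat.factorial_mul_stirlingSecond_eq_sum]
  field_simp

theorem K_nonneg (m j : ℕ) : 0 ≤ K m j := by
  rw [K_eq_stirlingSecond]
  exact Nat.cast_nonneg _

theorem B_nonneg (m : ℕ) : 0 ≤ B m := sum_nonneg fun j _ => K_nonneg m j

theorem stirlingSecond_le_B {m j : ℕ} (hj : 1 ≤ j) (hjm : j ≤ m) :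
    (Nat.stirlingSecond m j : ℝ) ≤ B m := by
  rw [B]
  simp_rw [K_eq_stirlingSecond]
  exact single_le_sum (fun i _ => Nat.cast_nonneg _) (mem_Icc.mpr ⟨hj, hjm⟩)

theorem one_le_B {m : ℕ} (hm : 1 ≤ m) : 1 ≤ B m := by
  simpa [Nat.stirlingSecond_self] using stirlingSecond_le_B hm le_rfl

theorem sum_K_div_B {m : ℕ} (hm : 1 ≤ m) : ∑ j ∈ Icc 1 m, K m j / B m = 1 := by
  rw [← sum_div, ← B, div_self (by linarith [one_le_B hm])]

/-- For `s < n`, the sum `∑ j, f n s j / (j + 1)` in `v` is `meanInvSucc (n - s)` by unfolding. -/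
noncomputable def meanInvSucc (m : ℕ) : ℝ := ∑ j ∈ Icc 1 m, K m j / B m / ((j : ℝ) + 1)

theorem meanInvSucc_nonneg (m : ℕ) : 0 ≤ meanInvSucc m :=
  sum_nonneg fun j _ => div_nonneg (div_nonneg (K_nonneg m j) (B_nonneg m)) (by positivity)

theorem meanInvSucc_le_half {m : ℕ} (hm : 1 ≤ m) : meanInvSucc m ≤ 1 / 2 := by
  calc meanInvSucc m ≤ ∑ j ∈ Icc 1 m, K m j / B m / 2 := by
        refine sum_le_sum fun j hj =>
          div_le_div_of_nonneg_left (div_nonneg (K_nonneg m j) (B_nonneg m)) two_pos ?_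
        have : (1 : ℝ) ≤ j := by exact_mod_cast (mem_Icc.mp hj).1
        linarith
    _ = 1 / 2 := by rw [← sum_div, sum_K_div_B hm]

theorem meanInvSucc_le_of_pow_le_B {m t : ℕ} (hm : 1 ≤ m) (hB : ((t : ℝ) + 1) ^ (m + 3) ≤ B m) :
    meanInvSucc m ≤ 2 / ((t : ℝ) + 2) := by
  have hB₀ : 0 < B m := by linarith [one_le_B hm]
  have small_blocks : ∑ j ∈ Icc 1 t, K m j / B m ≤ 1 / ((t : ℝ) + 2) := by
    calc ∑ j ∈ Icc 1 t, K m j / B m ≤ ∑ _j ∈ Icc 1 t, ((t : ℝ) + 1) ^ m / B m := by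
          refine sum_le_sum fun j hj => div_le_div_of_nonneg_right ?_ hB₀.le
          rw [K_eq_stirlingSecond]
          exact_mod_cast (Nat.stirlingSecond_le_succ_pow m j).trans
            (Nat.pow_le_pow_left (by simp only [mem_Icc] at hj; omega) m)
      _ = t * ((t : ℝ) + 1) ^ m / B m := by
          rw [sum_const, Nat.card_Icc, nsmul_eq_mul, mul_div_assoc, Nat.add_sub_cancel]
      _ ≤ 1 / ((t : ℝ) + 2) := by
          rw [div_le_div_iff₀ hB₀ (by positivity)]
          calc t * ((t : ℝ) + 1) ^ m * ((t : ℝ) + 2)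
              ≤ ((t : ℝ) + 1) ^ m * ((t : ℝ) + 1) ^ 2 * 1 := by
                nlinarith [pow_nonneg (by positivity : (0 : ℝ) ≤ t + 1) m]
            _ ≤ ((t : ℝ) + 1) ^ (m + 3) := by
                rw [mul_one, ← pow_add]
                exact pow_le_pow_right₀ (by simp) (by omega)
            _ ≤ 1 * B m := by rw [one_mul]; exact hB
  calc meanInvSucc m
      ≤ ∑ j ∈ Icc 1 t, K m j / B m + (∑ j ∈ Icc 1 m, K m j / B m) / ((t : ℝ) + 2) :=
        sum_div_succ_le_sum_add_div (fun j => div_nonneg (K_nonneg m j) hB₀.le) m t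
    _ ≤ 2 / ((t : ℝ) + 2) := by
        rw [sum_K_div_B hm, show (2 : ℝ) / (t + 2) = 1 / (t + 2) + 1 / (t + 2) by ring]
        linarith

theorem succ_pow_le_B {m t : ℕ} (h : (t + 1) ^ 3 ≤ (m / 3 - 2) ^ 2) :
    ((t : ℝ) + 1) ^ (m + 3) ≤ B m := by
  set k := m / 3 - 2
  have hk₁ : 1 ≤ k := Nat.one_le_iff_ne_zero.mpr fun hk₀ => by simp [hk₀] at h
  have h₁ : (t + 1) ^ (m + 3) ≤ k ^ (m - k) :=
    Nat.pow_le_pow_of_pow_le_pow (by omega) two_ne_zero h (by omega)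
  have h₂ : k ^ (m - k) ≤ Nat.stirlingSecond m k := by
    simpa [Nat.add_sub_cancel' (show k ≤ m by omega)] using Nat.pow_le_stirlingSecond k (m - k)
  calc ((t : ℝ) + 1) ^ (m + 3) ≤ Nat.stirlingSecond m k := by exact_mod_cast h₁.trans h₂
    _ ≤ B m := stirlingSecond_le_B hk₁ (by omega)

theorem cube_le_sq_of_two_pow_le {m : ℕ} (hm : 2 ^ 28 ≤ m) :
    (6 * Nat.sqrt m + 7) ^ 3 ≤ (m / 3 - 2) ^ 2 := by
  set r := Nat.sqrt m
  have hr : 2 ^ 14 ≤ r := Nat.le_sqrt'.mpr hm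
  have hr₁ : r ^ 2 ≤ 4 * (m / 3 - 2) := by
    have : r ^ 2 ≤ m := Nat.sqrt_le' m
    have : 2 ^ 28 ≤ r ^ 2 := by simpa using Nat.pow_le_pow_left hr 2
    omega
  calc (6 * r + 7) ^ 3 ≤ (7 * r) ^ 3 := Nat.pow_le_pow_left (by omega) 3
    _ ≤ (r ^ 2) ^ 2 / 16 := by
        rw [Nat.le_div_iff_mul_le (by norm_num)]
        have := Nat.mul_le_mul_left (r ^ 3) (show 5488 ≤ r by omega)
        nlinarith
    _ ≤ (4 * (m / 3 - 2)) ^ 2 / 16 := Nat.div_le_div_right (Nat.pow_le_pow_left hr₁ 2)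
    _ = (m / 3 - 2) ^ 2 := by rw [mul_pow]; norm_num

theorem meanInvSucc_sq_le {m : ℕ} (hm : 2 ^ 28 ≤ m) : meanInvSucc m ^ 2 ≤ 1 / (8 * m) := by
  set r := Nat.sqrt m
  have hG : meanInvSucc m ≤ 2 / (((6 * r + 6 : ℕ) : ℝ) + 2) :=
    meanInvSucc_le_of_pow_le_B (by omega) (succ_pow_le_B (cube_le_sq_of_two_pow_le hm))
  have h32 : 32 * (m : ℝ) ≤ (((6 * r + 6 : ℕ) : ℝ) + 2) ^ 2 := by
    have : (m : ℝ) < ((r : ℝ) + 1) ^ 2 := by exact_mod_cast (Nat.lt_succ_sqrt' m : m < (r + 1) ^ 2)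
    push_cast
    nlinarith [r.cast_nonneg (α := ℝ)]
  calc meanInvSucc m ^ 2 ≤ (2 / (((6 * r + 6 : ℕ) : ℝ) + 2)) ^ 2 :=
        pow_le_pow_left₀ (meanInvSucc_nonneg m) hG 2
    _ = 4 / (((6 * r + 6 : ℕ) : ℝ) + 2) ^ 2 := by rw [div_pow]; norm_num
    _ ≤ 4 / (32 * m) := by gcongr
    _ = 1 / (8 * m) := by ring

theorem F_eq_one_sub_meanInvSucc {n s : ℕ} (h : s < n) : F n s = 1 - meanInvSucc (n - s) := by
  calc F n s = ∑ j ∈ Icc 1 (n - s), (f n s j - f n s j / ((j : ℝ) + 1)) := by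
        refine sum_congr rfl fun j _ => ?_
        field_simp
        ring
    _ = 1 - meanInvSucc (n - s) := by
        rw [sum_sub_distrib]
        exact congrArg (· - meanInvSucc (n - s)) (sum_K_div_B (by omega))

theorem v_eq_of_lt {a c : ℝ} {n s : ℕ} (hs : s ≠ 0) (h : s < n) :
    v a c n s = (a - c) ^ 2 * (meanInvSucc (n - s) / (1 + meanInvSucc (n - s))) ^ 2 := by
  have hf : ∑ j ∈ Icc 1 (n - s), f n s j / ((j : ℝ) + 1) = meanInvSucc (n - s) := rfl
  rw [v, if_neg h.ne, if_neg hs, F_eq_one_sub_meanInvSucc h, hf, sub_sub_cancel,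
    show (2 : ℝ) - (1 - meanInvSucc (n - s)) = 1 + meanInvSucc (n - s) by ring, div_pow]
  ring

theorem sq_meanInvSucc_div_le {n s : ℕ} (hs : 1 ≤ s) (h : s < n) (hn : 2 ^ 29 ≤ n) :
    (meanInvSucc (n - s) / (1 + meanInvSucc (n - s))) ^ 2 ≤ s / (4 * n) := by
  set G := meanInvSucc (n - s)
  have hG₀ : 0 ≤ G := meanInvSucc_nonneg _
  have hs' : (1 : ℝ) ≤ s := by exact_mod_cast hs
  by_cases hlarge : 4 * n ≤ 9 * s
  · have hG : G / (1 + G) ≤ 1 / 3 := by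
      rw [div_le_iff₀ (by positivity)]
      linarith [meanInvSucc_le_half (show 1 ≤ n - s by omega)]
    have : (4 : ℝ) * n ≤ 9 * s := by exact_mod_cast hlarge
    calc (G / (1 + G)) ^ 2 ≤ (1 / 3 : ℝ) ^ 2 := pow_le_pow_left₀ (by positivity) hG 2
      _ ≤ s / (4 * n) := by rw [le_div_iff₀ (by positivity)]; linarith
  · have hm : (4 : ℝ) * n ≤ 8 * (n - s : ℕ) := by exact_mod_cast (by omega : 4 * n ≤ 8 * (n - s))
    calc (G / (1 + G)) ^ 2 ≤ G ^ 2 := by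
          gcongr
          exact div_le_self hG₀ (by linarith)
      _ ≤ 1 / (8 * ((n - s : ℕ) : ℝ)) := meanInvSucc_sq_le (by omega)
      _ ≤ 1 / (4 * n) := by gcongr
      _ ≤ s / (4 * n) := by gcongr

theorem stmt4_general (a c : ℝ) :
    ∃ N₀ : ℕ, ∀ n : ℕ, N₀ ≤ n →
      (∑ _i : Fin n, (a - c) ^ 2 / (4 * (n : ℝ)) = v a c n n) ∧
      (∀ S : Finset (Fin n), S.Nonempty →
        ∑ _i ∈ S, (a - c) ^ 2 / (4 * (n : ℝ)) = (S.card : ℝ) * (a - c) ^ 2 / (4 * (n : ℝ)) ∧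
        v a c n S.card ≤ (S.card : ℝ) * (a - c) ^ 2 / (4 * (n : ℝ))) := by
  refine ⟨2 ^ 29, fun n hn => ⟨?_, fun S hS => ⟨?_, ?_⟩⟩⟩
  · have : (n : ℝ) ≠ 0 := by norm_cast; omega
    rw [sum_const, card_univ, Fintype.card_fin, nsmul_eq_mul, v, if_pos rfl]
    field_simp
  · rw [sum_const, nsmul_eq_mul, mul_div_assoc]
  · have hSn : S.card ≤ n := by simpa using card_le_univ S
    rcases hSn.eq_or_lt with hSn | hSn
    · have : (n : ℝ) ≠ 0 := by norm_cast; omega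
      rw [hSn, v, if_pos rfl]
      exact le_of_eq (by field_simp)
    · rw [v_eq_of_lt hS.card_pos.ne' hSn, mul_comm (S.card : ℝ), mul_div_assoc]
      gcongr
      exact sq_meanInvSucc_div_le hS.card_pos hSn hn

/-- there is `N₀` such that for all `n ≥ N₀` the equal-split allocation
`x i = (a-c)²/(4n)` is a core allocation of `(Fin n, v^n)`, so the core is nonempty:
it is an allocation (sums to `v^n(n)`) and `Σ_{i∈S} x i = |S|·(a-c)²/(4n) ≥ v^n(|S|)`
for every nonempty coalition `S`. -/
theorem stmt4 (a c : ℝ) (hc : 0 < c) (hca : c < a) :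
    ∃ N₀ : ℕ, ∀ n : ℕ, N₀ ≤ n →
      (∑ _i : Fin n, (a - c) ^ 2 / (4 * (n : ℝ)) = v a c n n) ∧
      (∀ S : Finset (Fin n), S.Nonempty →
        ∑ _i ∈ S, (a - c) ^ 2 / (4 * (n : ℝ)) = (S.card : ℝ) * (a - c) ^ 2 / (4 * (n : ℝ)) ∧
        v a c n S.card ≤ (S.card : ℝ) * (a - c) ^ 2 / (4 * (n : ℝ))) :=
  stmt4_general a c
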